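/- arXiv:2005.12571 — 2 statements merged into one kernel-verified Lean document; each statement's English description precedes it below -/
import Mathlib

section
/- Let C₁ and C₂ be two disjoint simple closed curves in S², let Ω₁, Ω₂, A be the three connected components of S² \ (C₁ ∪ C₂) where Ω₁, Ω₂ are disks and A is the annular component, and suppose C₂ = a(C₁) for the antipodal map a. Then a(Ω₁) = Ω₂ and a(A) = A. -/
noncomputable section

/-- The unit 2-sphere in `ℝ³`. -/
abbrev Sphere2 : Set (EuclideanSpace ℝ (Fin 3)) := Metric.sphere 0 1

/-- The antipodal map on the 2-sphere. -/
def antipodal (x : Sphere2) : Sphere2 :=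
  ⟨-x.1, by
    rw [mem_sphere_zero_iff_norm, norm_neg]
    exact mem_sphere_zero_iff_norm.mp x.2⟩

/-- The real projective plane, as the quotient of the sphere by the antipodal map. -/
abbrev RealProjectivePlane : Type := Quot (fun x y : Sphere2 => y = antipodal x)

/-- The covering projection from the sphere to the projective plane. -/
def sphereProj : Sphere2 → RealProjectivePlane := Quot.mk _

/-- The unit circle in the plane. -/
abbrev Circle2 : Set (EuclideanSpace ℝ (Fin 2)) := Metric.sphere 0 1

/-- The open unit disk in the plane. -/
abbrev OpenDisk : Set (EuclideanSpace ℝ (Fin 2)) := Metric.ball 0 1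

/-- An open annulus in the plane. -/
abbrev OpenAnnulus : Set (EuclideanSpace ℝ (Fin 2)) := {x | ‖x‖ ∈ Set.Ioo (1:ℝ) 2}

/-- A set is a simple closed curve if it is homeomorphic to the circle. -/
def IsSimpleClosedCurve {X : Type*} [TopologicalSpace X] (C : Set X) : Prop :=
  Nonempty (C ≃ₜ Circle2)

/-- The strip `ℝ × (-1,1)`. -/
abbrev MobiusDom : Type := {p : ℝ × ℝ // p.2 ∈ Set.Ioo (-1:ℝ) 1}

/-- The generating relation `(x, y) ∼ (x + 1, -y)` for the open Möbius strip. -/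
def mobiusRel (p q : MobiusDom) : Prop := q.1.1 = p.1.1 + 1 ∧ q.1.2 = -p.1.2

/-- The open Möbius strip: the quotient of `ℝ × (-1,1)` by `(x,y) ∼ (x+1,-y)`. -/
abbrev OpenMobius : Type := Quot mobiusRel

/-- The generating relation `(x, y) ∼ (x + 2, y)` for the open cylinder. -/
def cylinderRel (p q : MobiusDom) : Prop := q.1.1 = p.1.1 + 2 ∧ q.1.2 = p.1.2

/-- The open cylinder: the quotient of `ℝ × (-1,1)` by `(x,y) ∼ (x+2,y)`. -/
abbrev OpenCylinder : Type := Quot cylinderRel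

/-- The orientation double covering of the open Möbius strip by the open cylinder. -/
def mobiusCover : OpenCylinder → OpenMobius :=
  Quot.lift (fun p => Quot.mk mobiusRel p) (by
    rintro p q ⟨h1, h2⟩
    have hmid : (-p.1.2) ∈ Set.Ioo (-1:ℝ) 1 := by
      obtain ⟨ha, hb⟩ := p.2; constructor <;> linarith
    have s1 : Quot.mk mobiusRel p = Quot.mk mobiusRel ⟨(p.1.1 + 1, -p.1.2), hmid⟩ :=
      Quot.sound ⟨rfl, rfl⟩
    have s2 : Quot.mk mobiusRel ⟨(p.1.1 + 1, -p.1.2), hmid⟩ = Quot.mk mobiusRel q := by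
      apply Quot.sound
      constructor
      · simpa [h1] using by ring
      · simp [h2]
    exact s1.trans s2)

/-- The nontrivial deck transformation of the covering `mobiusCover`,
induced by `(x, y) ↦ (x + 1, -y)`. -/
def mobiusDeck : OpenCylinder → OpenCylinder :=
  Quot.lift
    (fun p => Quot.mk cylinderRel
      ⟨(p.1.1 + 1, -p.1.2), by obtain ⟨ha, hb⟩ := p.2; constructor <;> dsimp <;> linarith⟩)
    (by
      rintro p q ⟨h1, h2⟩
      apply Quot.sound
      constructor
      · simpa [h1] using by ring
      · simp [h2])

/-- A 2-manifold (an open subset of a surface) is *orientable* if it contains no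
homeomorphic copy of the open Möbius strip. -/
def Orientable (X : Type*) [TopologicalSpace X] : Prop :=
  ¬ ∃ A : Set X, Nonempty (A ≃ₜ OpenMobius)

end


noncomputable section AuxAntipodal

lemma antipodal_continuous : Continuous antipodal :=
  Continuous.subtype_mk (continuous_neg.comp continuous_subtype_val) _

lemma antipodal_invol (x : Sphere2) : antipodal (antipodal x) = x :=
  Subtype.ext (by simp [antipodal])

def antipodalHomeo : Sphere2 ≃ₜ Sphere2 where
  toFun := antipodal
  invFun := antipodal
  left_inv := antipodal_invol
  right_inv := antipodal_invol
  continuous_toFun := antipodal_continuous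
  continuous_invFun := antipodal_continuous

lemma antipodal_image_image (S : Set Sphere2) : antipodal '' (antipodal '' S) = S := by
  rw [Set.image_image]
  simp [antipodal_invol]

lemma antipodal_frontier (S : Set Sphere2) :
    frontier (antipodal '' S) = antipodal '' frontier S :=
  (antipodalHomeo.image_frontier S).symm

end AuxAntipodal

/-- Let `C₁, C₂` be disjoint simple closed curves in `S²` with
`a(C₁) = C₂`, and let `Ω₁, Ω₂, A` be the three components of `S² \ (C₁ ∪ C₂)` (two
open disks with frontiers `C₁`, `C₂`, and an annulus with frontier `C₁ ∪ C₂`). Then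
`a(Ω₁) = Ω₂` and `a(A) = A`. -/
theorem antipodal_exchanges_disks_and_fixes_annulus
    (C₁ C₂ : Set Sphere2) (h₁ : IsSimpleClosedCurve C₁) (h₂ : IsSimpleClosedCurve C₂)
    (hC : Disjoint C₁ C₂) (ha : antipodal '' C₁ = C₂)
    (Ω₁ Ω₂ A : Set Sphere2)
    (hO₁ : IsOpen Ω₁) (hO₂ : IsOpen Ω₂) (hA : IsOpen A)
    (hc₁ : IsConnected Ω₁) (hc₂ : IsConnected Ω₂) (hcA : IsConnected A)
    (hd₁ : Disjoint Ω₁ Ω₂) (hd₂ : Disjoint Ω₁ A) (hd₃ : Disjoint Ω₂ A)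
    (hun : Ω₁ ∪ Ω₂ ∪ A = (C₁ ∪ C₂)ᶜ)
    (hdisk₁ : Nonempty (Ω₁ ≃ₜ OpenDisk)) (hdisk₂ : Nonempty (Ω₂ ≃ₜ OpenDisk))
    (hann : Nonempty (A ≃ₜ OpenAnnulus))
    (hf₁ : frontier Ω₁ = C₁) (hf₂ : frontier Ω₂ = C₂) (hfA : frontier A = C₁ ∪ C₂) :
    antipodal '' Ω₁ = Ω₂ ∧ antipodal '' A = A := by
  obtain ⟨e₁⟩ := h₁
  obtain ⟨e₂⟩ := h₂
  have hcirc : (Circle2).Nonempty := by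
    refine ⟨EuclideanSpace.single 0 1, ?_⟩
    simp [mem_sphere_zero_iff_norm, EuclideanSpace.norm_single]
  obtain ⟨c, hc⟩ := hcirc
  have hC₁ne : C₁.Nonempty := ⟨(e₁.symm ⟨c, hc⟩).1, (e₁.symm ⟨c, hc⟩).2⟩
  have hC₂ne : C₂.Nonempty := ⟨(e₂.symm ⟨c, hc⟩).1, (e₂.symm ⟨c, hc⟩).2⟩
  have haC₂ : antipodal '' C₂ = C₁ := by rw [← ha, antipodal_image_image]
  have hCC : antipodal '' (C₁ ∪ C₂) = C₁ ∪ C₂ := by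
    rw [Set.image_union, ha, haC₂, Set.union_comm]
  have hK : ∀ S : Set Sphere2, S ⊆ (C₁ ∪ C₂)ᶜ → antipodal '' S ⊆ (C₁ ∪ C₂)ᶜ := by
    rintro S hS x ⟨y, hy, rfl⟩ hxC
    have h' := Set.mem_image_of_mem antipodal hxC
    rw [hCC, antipodal_invol] at h'
    exact hS hy h'
  have hsubK₁ : Ω₁ ⊆ (C₁ ∪ C₂)ᶜ := by
    rw [← hun]; exact Set.subset_union_left.trans Set.subset_union_left
  have hsubK₂ : Ω₂ ⊆ (C₁ ∪ C₂)ᶜ := by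
    rw [← hun]; exact Set.subset_union_right.trans Set.subset_union_left
  have hsubKA : A ⊆ (C₁ ∪ C₂)ᶜ := by
    rw [← hun]; exact Set.subset_union_right
  have key : ∀ S : Set Sphere2, IsPreconnected S → S ⊆ (C₁ ∪ C₂)ᶜ →
      S ⊆ Ω₁ ∨ S ⊆ Ω₂ ∨ S ⊆ A := by
    intro S hS hSK
    have hSsub : S ⊆ Ω₁ ∪ (Ω₂ ∪ A) := by rw [← Set.union_assoc, hun]; exact hSK
    rcases hS.subset_or_subset hO₁ (hO₂.union hA)
        (Set.disjoint_union_right.mpr ⟨hd₁, hd₂⟩) hSsub with h | h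
    · exact Or.inl h
    · rcases hS.subset_or_subset hO₂ hA hd₃ h with h' | h'
      · exact Or.inr (Or.inl h')
      · exact Or.inr (Or.inr h')
  have himg : ∀ S : Set Sphere2, IsConnected S → S ⊆ (C₁ ∪ C₂)ᶜ →
      antipodal '' S ⊆ Ω₁ ∨ antipodal '' S ⊆ Ω₂ ∨ antipodal '' S ⊆ A :=
    fun S hS hSK =>
      key _ ((hS.image _ antipodal_continuous.continuousOn).isPreconnected) (hK _ hSK)
  have disj : ∀ X Y : Set Sphere2, (X = Ω₁ ∨ X = Ω₂ ∨ X = A) →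
      (Y = Ω₁ ∨ Y = Ω₂ ∨ Y = A) → X ≠ Y → Disjoint X Y := by
    rintro X Y (rfl | rfl | rfl) (rfl | rfl | rfl) hne
    · exact absurd rfl hne
    · exact hd₁
    · exact hd₂
    · exact hd₁.symm
    · exact absurd rfl hne
    · exact hd₃
    · exact hd₂.symm
    · exact hd₃.symm
    · exact absurd rfl hne
  have memsub : ∀ X : Set Sphere2, (X = Ω₁ ∨ X = Ω₂ ∨ X = A) →
      IsConnected X ∧ X ⊆ (C₁ ∪ C₂)ᶜ := by
    rintro X (rfl | rfl | rfl)
    exacts [⟨hc₁, hsubK₁⟩, ⟨hc₂, hsubK₂⟩, ⟨hcA, hsubKA⟩]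
  have mainstep : ∀ S : Set Sphere2, (S = Ω₁ ∨ S = Ω₂ ∨ S = A) →
      ∃ X : Set Sphere2, (X = Ω₁ ∨ X = Ω₂ ∨ X = A) ∧ antipodal '' S = X := by
    intro S hSmem
    obtain ⟨hSc, hSK⟩ := memsub S hSmem
    obtain ⟨X, hXmem, hsub⟩ : ∃ X : Set Sphere2,
        (X = Ω₁ ∨ X = Ω₂ ∨ X = A) ∧ antipodal '' S ⊆ X := by
      rcases himg S hSc hSK with h | h | h
      exacts [⟨Ω₁, Or.inl rfl, h⟩, ⟨Ω₂, Or.inr (Or.inl rfl), h⟩, ⟨A, Or.inr (Or.inr rfl), h⟩]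
    obtain ⟨hXc, hXK⟩ := memsub X hXmem
    obtain ⟨Y, hYmem, hsub'⟩ : ∃ Y : Set Sphere2,
        (Y = Ω₁ ∨ Y = Ω₂ ∨ Y = A) ∧ antipodal '' X ⊆ Y := by
      rcases himg X hXc hXK with h | h | h
      exacts [⟨Ω₁, Or.inl rfl, h⟩, ⟨Ω₂, Or.inr (Or.inl rfl), h⟩, ⟨A, Or.inr (Or.inr rfl), h⟩]
    have hSY : S ⊆ Y := by
      calc S = antipodal '' (antipodal '' S) := (antipodal_image_image S).symm
        _ ⊆ antipodal '' X := Set.image_mono hsub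
        _ ⊆ Y := hsub'
    have hYS : Y = S := by
      by_contra hne
      obtain ⟨x, hx⟩ := hSc.nonempty
      exact Set.disjoint_left.mp (disj S Y hSmem hYmem (fun h => hne h.symm)) hx (hSY hx)
    rw [hYS] at hsub'
    have hXsub : X ⊆ antipodal '' S := by
      calc X = antipodal '' (antipodal '' X) := (antipodal_image_image X).symm
        _ ⊆ antipodal '' S := Set.image_mono hsub'
    exact ⟨X, hXmem, hsub.antisymm hXsub⟩
  have hne21 : C₂ ≠ C₁ := by
    intro h
    obtain ⟨x, hx⟩ := hC₁ne
    have hx2 : x ∈ C₂ := by rw [h]; exact hx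
    exact Set.disjoint_left.mp hC hx hx2
  have hneA2 : C₂ ≠ C₁ ∪ C₂ := by
    intro h
    obtain ⟨x, hx⟩ := hC₁ne
    have hx2 : x ∈ C₂ := by rw [h]; exact Or.inl hx
    exact Set.disjoint_left.mp hC hx hx2
  have hneA1 : C₁ ∪ C₂ ≠ C₁ := by
    intro h
    obtain ⟨x, hx⟩ := hC₂ne
    have hx1 : x ∈ C₁ := by rw [← h]; exact Or.inr hx
    exact Set.disjoint_left.mp hC hx1 hx
  obtain ⟨X, hXmem, hX⟩ := mainstep Ω₁ (Or.inl rfl)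
  have hfrX : frontier X = C₂ := by rw [← hX, antipodal_frontier, hf₁, ha]
  have h1 : antipodal '' Ω₁ = Ω₂ := by
    rcases hXmem with rfl | rfl | rfl
    · exact absurd (hf₁.symm.trans hfrX).symm hne21
    · exact hX
    · exact absurd (hfA.symm.trans hfrX).symm hneA2
  obtain ⟨Y, hYmem, hY⟩ := mainstep A (Or.inr (Or.inr rfl))
  have hfrY : frontier Y = C₁ ∪ C₂ := by
    rw [← hY, antipodal_frontier, hfA, Set.image_union, ha, haC₂, Set.union_comm]
  have h2 : antipodal '' A = A := by
    rcases hYmem with rfl | rfl | rfl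
    · exact absurd (hf₁.symm.trans hfrY).symm hneA1
    · exact absurd (hf₂.symm.trans hfrY) hneA2
    · exact hY
  exact ⟨h1, h2⟩
end

section
/- Let γ₀, γ₁ be two paths in the open Möbius strip M, each lifting to a path in the orientation double cover C connecting a point to its image under the nontrivial deck transformation (i.e., each γᵢ is an orientation-reversing loop). Then the images of γ₀ and γ₁ in M must intersect. -/
/-!
Represent points of the cylinder by `(x, y) ∈ ℝ × (-1, 1)` taken modulo `x ↦ x + 2`, and put
`S(p, q) = sin π(x' - x) + i (y' - cos π(x' - x) y)`. It vanishes exactly when `p` and `q` lie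
over the same point of the Möbius strip, and the deck transformation `τ` acts by
`S(p, τ q) = -S(p, q)` and `S(τ p, q) = -conj S(p, q)`. If the loops were disjoint,
`W(t, s) = S(g₀ t, g₁ s)` would vanish nowhere on the square, so `W = exp L` for a continuous `L`.
Then `L(t, 1) - L(t, 0)` and `L(1, s) - conj L(0, s)` have constant exponential `-1`, hence are
constant; comparing them at the corners shows that `L(0, 1) - L(0, 0)` is real, contradicting
`exp (L(0, 1) - L(0, 0)) = -1`.
-/

open scoped Real unitInterval ComplexConjugate

instance unitInterval.contractibleSpace : ContractibleSpace I :=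
  (convex_Icc (0 : ℝ) 1).contractibleSpace (Set.nonempty_Icc.2 zero_le_one)

instance unitInterval.locallyPathConnectedSpace : LocallyPathConnectedSpace I :=
  (convex_Icc (0 : ℝ) 1).locallyPathConnectedSpace

theorem ContinuousMap.exists_exp_eq {A : Type*} [TopologicalSpace A] [SimplyConnectedSpace A]
    [LocallyPathConnectedSpace A] (f : C(A, ℂ)) (hf : ∀ a, f a ≠ 0) :
    ∃ L : C(A, ℂ), ∀ a, Complex.exp (L a) = f a := by
  obtain ⟨a₀⟩ : Nonempty A := inferInstance
  obtain ⟨L, ⟨-, hL⟩, -⟩ :=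
    Complex.isCoveringMapOn_exp.existsUnique_continuousMap_lifts f
      (Complex.exp_log (hf a₀)) hf
  exact ⟨L, congrFun hL⟩

theorem Complex.const_of_exp_const {A : Type*} [TopologicalSpace A] [PreconnectedSpace A]
    {f : A → ℂ} (hf : Continuous f) (h : ∀ a a', exp (f a) = exp (f a')) (a a' : A) :
    f a = f a' :=
  isCoveringMap_exp.const_of_comp hf (fun a a' => Subtype.ext (h a a')) a a'

theorem exists_eq_zero_of_neg_of_neg_conj (W : C(I × I, ℂ))
    (h_top : ∀ t, W (t, 1) = -W (t, 0)) (h_right : ∀ s, W (1, s) = -conj (W (0, s))) :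
    ∃ x, W x = 0 := by
  by_contra! hW
  obtain ⟨L, hL⟩ := W.exists_exp_eq hW
  have exp_vertical (t : I) : Complex.exp (L (t, 1) - L (t, 0)) = -1 := by
    rw [Complex.exp_sub, hL, hL, h_top, neg_div, div_self (hW _)]
  have exp_horizontal (s : I) : Complex.exp (L (1, s) - conj (L (0, s))) = -1 := by
    rw [Complex.exp_sub, Complex.exp_conj, hL, hL, h_right, neg_div,
      div_self ((map_ne_zero _).2 (hW _))]
  have vertical := Complex.const_of_exp_const (by fun_prop)
    (fun t t' => (exp_vertical t).trans (exp_vertical t').symm) (1 : I) 0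
  have horizontal := Complex.const_of_exp_const (by fun_prop)
    (fun s s' => (exp_horizontal s).trans (exp_horizontal s').symm) (1 : I) 0
  obtain ⟨r, hr⟩ : ∃ r : ℝ, L (0, 1) - L (0, 0) = r := by
    refine Complex.conj_eq_iff_real.1 ?_
    simp only [map_sub] at horizontal ⊢
    linear_combination vertical - horizontal
  have exp_real : Real.exp r = -1 := by
    exact_mod_cast hr ▸ exp_vertical 0
  linarith [Real.exp_pos r]

theorem Quot.mk_eq_of_rel_succ {α : Type*} {r : α → α → Prop} (f : ℤ → α)
    (hf : ∀ n, r (f n) (f (n + 1))) (n : ℤ) : Quot.mk r (f n) = Quot.mk r (f 0) := by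
  induction n using Int.induction_on with
  | zero => rfl
  | succ n ih => rw [← ih]; exact (Quot.sound (hf n)).symm
  | pred n ih => rw [← ih]; exact Quot.sound (by simpa using hf (-n - 1))

theorem mobius_mk_eq_of_int (p q : MobiusDom) (n : ℤ) (hx : q.1.1 = p.1.1 + n)
    (hy : q.1.2 = (-1) ^ n * p.1.2) : Quot.mk mobiusRel p = Quot.mk mobiusRel q := by
  let shift (k : ℤ) : MobiusDom := ⟨(p.1.1 + k, (-1) ^ k * p.1.2), abs_lt.1 <| by
    rw [abs_mul, abs_neg_one_zpow, one_mul]; exact abs_lt.2 p.2⟩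
  have hshift (k : ℤ) : mobiusRel (shift k) (shift (k + 1)) :=
    ⟨by simp only [shift]; push_cast; ring, by simp [shift, zpow_add_one₀]⟩
  have hq : q = shift n := Subtype.ext (Prod.ext hx hy)
  have hp : p = shift 0 := by simp [shift]
  rw [hq, Quot.mk_eq_of_rel_succ shift hshift, ← hp]

noncomputable def stripSep (p q : MobiusDom) : ℂ :=
  ⟨Real.sin (π * (q.1.1 - p.1.1)), q.1.2 - Real.cos (π * (q.1.1 - p.1.1)) * p.1.2⟩

theorem mobius_mk_eq_of_stripSep_eq_zero {p q : MobiusDom} (h : stripSep p q = 0) :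
    Quot.mk mobiusRel p = Quot.mk mobiusRel q := by
  obtain ⟨hsin, hy⟩ := Complex.ext_iff.1 h
  obtain ⟨n, hn⟩ := Real.sin_eq_zero_iff.1 hsin
  have hx : q.1.1 - p.1.1 = n :=
    (mul_right_cancel₀ Real.pi_ne_zero (hn.trans (mul_comm _ _))).symm
  refine mobius_mk_eq_of_int p q n (by linarith) ?_
  simp only [stripSep, Complex.zero_im, hx, mul_comm π, Real.cos_int_mul_pi] at hy
  linarith

def stripDeck (p : MobiusDom) : MobiusDom :=
  ⟨(p.1.1 + 1, -p.1.2), abs_lt.1 <| by rw [abs_neg]; exact abs_lt.2 p.2⟩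

theorem stripSep_stripDeck_right (p q : MobiusDom) :
    stripSep p (stripDeck q) = -stripSep p q := by
  have : π * (q.1.1 + 1 - p.1.1) = π * (q.1.1 - p.1.1) + π := by ring
  apply Complex.ext
  · simp [stripSep, stripDeck, this, Real.sin_add_pi]
  · simp [stripSep, stripDeck, this, Real.cos_add_pi]
    ring

theorem stripSep_stripDeck_left (p q : MobiusDom) :
    stripSep (stripDeck p) q = -conj (stripSep p q) := by
  have : π * (q.1.1 - (p.1.1 + 1)) = π * (q.1.1 - p.1.1) - π := by ring
  apply Complex.ext <;> simp [stripSep, stripDeck, this, Real.sin_sub_pi, Real.cos_sub_pi]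

noncomputable def stripToComplex (p : MobiusDom) : ℂ :=
  ((2 + p.1.2 : ℝ) : ℂ) * Complex.exp ((π * p.1.1 : ℝ) * Complex.I)

theorem norm_stripToComplex (p : MobiusDom) : ‖stripToComplex p‖ = 2 + p.1.2 := by
  rw [stripToComplex, norm_mul, Complex.norm_exp_ofReal_mul_I, mul_one, Complex.norm_real,
    Real.norm_of_nonneg (by linarith [p.2.1])]

theorem stripToComplex_ne_zero (p : MobiusDom) : stripToComplex p ≠ 0 :=
  norm_pos_iff.1 (by rw [norm_stripToComplex]; linarith [p.2.1])

noncomputable def cylinderToComplex : OpenCylinder → ℂ :=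
  Quot.lift stripToComplex fun p q ⟨hx, hy⟩ => by
    have : ((π * q.1.1 : ℝ) : ℂ) * Complex.I =
        (π * p.1.1 : ℝ) * Complex.I + 2 * π * Complex.I := by
      rw [hx]; push_cast; ring
    rw [stripToComplex, stripToComplex, hy, this, Complex.exp_add, Complex.exp_two_pi_mul_I,
      mul_one]

theorem continuous_cylinderToComplex : Continuous cylinderToComplex :=
  continuous_quot_lift _ (by unfold stripToComplex; fun_prop)

theorem cylinderToComplex_ne_zero (a : OpenCylinder) : cylinderToComplex a ≠ 0 := by
  induction a using Quot.ind
  exact stripToComplex_ne_zero _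

-- For `z = (2 + y) e^{iπx}` and `w = (2 + y') e^{iπx'}`, `u = e^{iπ(x' - x)}` and `‖z‖ - 2 = y`.
noncomputable def complexSep (z w : ℂ) : ℂ :=
  let u := w * conj z / (‖w‖ * ‖z‖)
  u.im + (‖w‖ - 2 - u.re * (‖z‖ - 2)) * Complex.I

theorem complexSep_stripToComplex (p q : MobiusDom) :
    complexSep (stripToComplex p) (stripToComplex q) = stripSep p q := by
  have hu : stripToComplex q * conj (stripToComplex p) /
      (‖stripToComplex q‖ * ‖stripToComplex p‖) =
      Complex.exp ((π * (q.1.1 - p.1.1) : ℝ) * Complex.I) := by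
    have : ((π * (q.1.1 - p.1.1) : ℝ) : ℂ) * Complex.I =
        (π * q.1.1 : ℝ) * Complex.I + conj ((π * p.1.1 : ℝ) * Complex.I) := by
      simp only [map_mul, Complex.conj_ofReal, Complex.conj_I]; push_cast; ring
    have hp : ((2 + p.1.2 : ℝ) : ℂ) ≠ 0 := Complex.ofReal_ne_zero.2 (by linarith [p.2.1])
    have hq : ((2 + q.1.2 : ℝ) : ℂ) ≠ 0 := Complex.ofReal_ne_zero.2 (by linarith [q.2.1])
    rw [norm_stripToComplex, norm_stripToComplex, this, Complex.exp_add, Complex.exp_conj,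
      stripToComplex, stripToComplex, map_mul, Complex.conj_ofReal]
    field_simp
  simp only [complexSep, hu, Complex.exp_ofReal_mul_I_re, Complex.exp_ofReal_mul_I_im]
  apply Complex.ext <;>
    simp [norm_stripToComplex, stripSep, -Complex.ofReal_sin, -Complex.ofReal_cos]

noncomputable def cylinderSep (a b : OpenCylinder) : ℂ :=
  complexSep (cylinderToComplex a) (cylinderToComplex b)

theorem cylinderSep_mk (p q : MobiusDom) :
    cylinderSep (Quot.mk _ p) (Quot.mk _ q) = stripSep p q :=
  complexSep_stripToComplex p q

theorem continuous_cylinderSep :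
    Continuous fun x : OpenCylinder × OpenCylinder => cylinderSep x.1 x.2 := by
  have h₁ : Continuous fun x : OpenCylinder × OpenCylinder => cylinderToComplex x.1 :=
    continuous_cylinderToComplex.comp continuous_fst
  have h₂ : Continuous fun x : OpenCylinder × OpenCylinder => cylinderToComplex x.2 :=
    continuous_cylinderToComplex.comp continuous_snd
  have hu : Continuous fun x : OpenCylinder × OpenCylinder =>
      cylinderToComplex x.2 * conj (cylinderToComplex x.1) /
        (‖cylinderToComplex x.2‖ * ‖cylinderToComplex x.1‖) :=
    (h₂.mul (Complex.continuous_conj.comp h₁)).div (by fun_prop) fun x => by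
      simp [cylinderToComplex_ne_zero]
  dsimp only [cylinderSep, complexSep]
  fun_prop

theorem mobiusDeck_mk (p : MobiusDom) :
    mobiusDeck (Quot.mk _ p) = Quot.mk _ (stripDeck p) :=
  rfl

theorem cylinderSep_mobiusDeck_right (a b : OpenCylinder) :
    cylinderSep a (mobiusDeck b) = -cylinderSep a b := by
  induction a using Quot.ind
  induction b using Quot.ind
  simp only [mobiusDeck_mk, cylinderSep_mk, stripSep_stripDeck_right]

theorem cylinderSep_mobiusDeck_left (a b : OpenCylinder) :
    cylinderSep (mobiusDeck a) b = -conj (cylinderSep a b) := by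
  induction a using Quot.ind
  induction b using Quot.ind
  simp only [mobiusDeck_mk, cylinderSep_mk, stripSep_stripDeck_left]

theorem mobiusCover_eq_of_cylinderSep_eq_zero {a b : OpenCylinder} (h : cylinderSep a b = 0) :
    mobiusCover a = mobiusCover b := by
  induction a using Quot.ind
  induction b using Quot.ind
  rw [cylinderSep_mk] at h
  exact mobius_mk_eq_of_stripSep_eq_zero h

theorem exists_mobiusCover_eq_of_mobiusDeck (g₀ g₁ : C(I, OpenCylinder))
    (h₀ : g₀ 1 = mobiusDeck (g₀ 0)) (h₁ : g₁ 1 = mobiusDeck (g₁ 0)) :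
    ∃ t s, mobiusCover (g₀ t) = mobiusCover (g₁ s) := by
  let W : C(I × I, ℂ) :=
    ⟨fun x => cylinderSep (g₀ x.1) (g₁ x.2), continuous_cylinderSep.comp
      ((g₀.continuous.comp continuous_fst).prodMk (g₁.continuous.comp continuous_snd))⟩
  obtain ⟨⟨t, s⟩, hW⟩ := exists_eq_zero_of_neg_of_neg_conj W
    (fun t => show cylinderSep _ (g₁ 1) = -cylinderSep _ (g₁ 0) by
      rw [h₁, cylinderSep_mobiusDeck_right])
    (fun s => show cylinderSep (g₀ 1) _ = -conj (cylinderSep (g₀ 0) _) by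
      rw [h₀, cylinderSep_mobiusDeck_left])
  exact ⟨t, s, mobiusCover_eq_of_cylinderSep_eq_zero hW⟩

theorem orientation_reversing_loops_intersect_general
    (γ₀ γ₁ : ℝ → OpenMobius)
    (g₀ g₁ : ℝ → OpenCylinder)
    (hg₀ : ContinuousOn g₀ (Set.Icc 0 1)) (hg₁ : ContinuousOn g₁ (Set.Icc 0 1))
    (hlift₀ : ∀ t ∈ Set.Icc (0:ℝ) 1, mobiusCover (g₀ t) = γ₀ t)
    (hlift₁ : ∀ t ∈ Set.Icc (0:ℝ) 1, mobiusCover (g₁ t) = γ₁ t)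
    (hdeck₀ : g₀ 1 = mobiusDeck (g₀ 0)) (hdeck₁ : g₁ 1 = mobiusDeck (g₁ 0)) :
    (γ₀ '' Set.Icc 0 1 ∩ γ₁ '' Set.Icc 0 1).Nonempty := by
  obtain ⟨t, s, h⟩ := exists_mobiusCover_eq_of_mobiusDeck
    ⟨_, hg₀.domRestrict⟩ ⟨_, hg₁.domRestrict⟩ hdeck₀ hdeck₁
  exact ⟨γ₀ t, ⟨t, t.2, rfl⟩, s, s.2, by rw [← hlift₀ t t.2, ← hlift₁ s s.2]; exact h.symm⟩

/-- Any two orientation-reversing loops in the open Möbius strip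
(loops whose lifts to the orientation double cover join a point to its image under the
nontrivial deck transformation) have intersecting images. -/
theorem orientation_reversing_loops_intersect
    (γ₀ γ₁ : ℝ → OpenMobius)
    (h₀ : ContinuousOn γ₀ (Set.Icc 0 1)) (h₁ : ContinuousOn γ₁ (Set.Icc 0 1))
    (g₀ g₁ : ℝ → OpenCylinder)
    (hg₀ : ContinuousOn g₀ (Set.Icc 0 1)) (hg₁ : ContinuousOn g₁ (Set.Icc 0 1))
    (hlift₀ : ∀ t ∈ Set.Icc (0:ℝ) 1, mobiusCover (g₀ t) = γ₀ t)
    (hlift₁ : ∀ t ∈ Set.Icc (0:ℝ) 1, mobiusCover (g₁ t) = γ₁ t)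
    (hdeck₀ : g₀ 1 = mobiusDeck (g₀ 0)) (hdeck₁ : g₁ 1 = mobiusDeck (g₁ 0)) :
    (γ₀ '' Set.Icc 0 1 ∩ γ₁ '' Set.Icc 0 1).Nonempty :=
  orientation_reversing_loops_intersect_general γ₀ γ₁ g₀ g₁ hg₀ hg₁ hlift₀ hlift₁ hdeck₀ hdeck₁
end
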